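/- arXiv:2304.02231 — 7 statements merged into one kernel-verified Lean document; each statement's English description precedes it below -/
import Mathlib

section
/- If α ≤ 2 and α ≠ 0, then for all t ∈ [0,1], |g(t)| ≤ 1, where g(t) = (1-2t)·exp(α(t-t²)), with g(0)=1 and g(1)=-1. -/
theorem stmt_2 (α : ℝ) (hα2 : α ≤ 2) (hα0 : α ≠ 0) (g : ℝ → ℝ)
    (hg : ∀ t, g t = (1 - 2*t) * Real.exp (α * (t - t^2))) :
    (∀ t ∈ Set.Icc (0:ℝ) 1, |g t| ≤ 1) ∧ g 0 = 1 ∧ g 1 = -1 := by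
  refine ⟨?_, by simp [hg], by norm_num [hg]⟩
  intro t ht
  obtain ⟨h0, h1⟩ := ht
  rw [hg, abs_mul, Real.abs_exp]
  have hs : 0 ≤ t - t^2 := by nlinarith
  have h2 : Real.exp (α * (t - t^2)) ≤ Real.exp (2 * (t - t^2)) :=
    Real.exp_le_exp.2 (by nlinarith)
  have h4 : |1 - 2*t| ≤ Real.exp (-(2*(t-t^2))) := by
    have h3 := Real.add_one_le_exp (-(2*(t-t^2)))
    rcases abs_cases (1-2*t) with ⟨h,_⟩|⟨h,_⟩ <;> nlinarith
  calc |1-2*t| * Real.exp (α*(t-t^2))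
      ≤ |1-2*t| * Real.exp (2*(t-t^2)) :=
        mul_le_mul_of_nonneg_left h2 (abs_nonneg _)
    _ ≤ Real.exp (-(2*(t-t^2))) * Real.exp (2*(t-t^2)) :=
        mul_le_mul_of_nonneg_right h4 (Real.exp_nonneg _)
    _ = 1 := by rw [← Real.exp_add]; norm_num
end

section
/- For α ≤ 2, α ≠ 0, and |δ| ≤ 1/α², the function c(u,v) = 1 + δ·α²·(1-2u)(1-2v)·exp(α(u-u²+v-v²)) is nonnegative for all (u,v) ∈ [0,1]². -/
lemma aux_stmt5 (α : ℝ) (hα : α ≤ 2) (u : ℝ) (hu0 : 0 ≤ u) (hu1 : u ≤ 1) :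
    |1 - 2*u| * Real.exp (α*(u - u^2)) ≤ 1 := by
  have huu : 0 ≤ u - u^2 := by nlinarith
  rcases eq_or_ne (1 - 2*u) 0 with h | h
  · rw [h]; simp
  · have hpos : 0 < |1 - 2*u| := abs_pos.mpr h
    have hlog : Real.log ((1-2*u)^2) ≤ (1-2*u)^2 - 1 :=
      Real.log_le_sub_one_of_pos (by positivity)
    have hlog2 : Real.log ((1-2*u)^2) = 2 * Real.log |1-2*u| := by
      rw [← sq_abs, Real.log_pow]; push_cast; ring
    have key : α*(u - u^2) ≤ -Real.log |1-2*u| := by nlinarith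
    calc |1-2*u| * Real.exp (α*(u-u^2))
        ≤ |1-2*u| * Real.exp (-Real.log |1-2*u|) := by
          have := Real.exp_le_exp.mpr key
          nlinarith [abs_nonneg (1-2*u)]
      _ = 1 := by
          rw [Real.exp_neg, Real.exp_log hpos]
          field_simp

theorem stmt_5 (α δ : ℝ) (hα2 : α ≤ 2) (hα0 : α ≠ 0) (hδ : |δ| ≤ 1/α^2) :
    ∀ u ∈ Set.Icc (0:ℝ) 1, ∀ v ∈ Set.Icc (0:ℝ) 1,
      1 + δ * α^2 * (1 - 2*u) * (1 - 2*v) * Real.exp (α * (u - u^2 + v - v^2)) ≥ 0 := by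
  rintro u ⟨hu0, hu1⟩ v ⟨hv0, hv1⟩
  have hα2pos : (0:ℝ) < α^2 := by positivity
  have hδα : |δ| * α^2 ≤ 1 := by
    calc |δ| * α^2 ≤ (1/α^2) * α^2 := by gcongr
      _ = 1 := by field_simp
  have hE : Real.exp (α * (u - u^2 + v - v^2))
      = Real.exp (α*(u - u^2)) * Real.exp (α*(v - v^2)) := by
    rw [← Real.exp_add]; ring_nf
  have hA := aux_stmt5 α hα2 u hu0 hu1
  have hB := aux_stmt5 α hα2 v hv0 hv1
  have hA0 : 0 ≤ |1 - 2*u| * Real.exp (α*(u - u^2)) := by positivity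
  have hB0 : 0 ≤ |1 - 2*v| * Real.exp (α*(v - v^2)) := by positivity
  have habs : |δ * α^2 * (1 - 2*u) * (1 - 2*v) * Real.exp (α * (u - u^2 + v - v^2))| ≤ 1 := by
    rw [hE]
    have : |δ * α^2 * (1 - 2*u) * (1 - 2*v) * (Real.exp (α*(u - u^2)) * Real.exp (α*(v - v^2)))|
        = (|δ| * α^2) * ((|1 - 2*u| * Real.exp (α*(u - u^2))) * (|1 - 2*v| * Real.exp (α*(v - v^2)))) := by
      rw [abs_mul, abs_mul, abs_mul, abs_mul, abs_mul, abs_of_nonneg (le_of_lt hα2pos),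
        abs_of_nonneg (Real.exp_pos _).le, abs_of_nonneg (Real.exp_pos _).le]
      ring
    rw [this]
    calc (|δ| * α^2) * ((|1 - 2*u| * Real.exp (α*(u - u^2))) * (|1 - 2*v| * Real.exp (α*(v - v^2))))
        ≤ 1 * (1 * 1) := by
          apply mul_le_mul hδα _ (by positivity) zero_le_one
          exact mul_le_mul hA hB hB0 (le_trans hA0 hA)
      _ = 1 := by ring
  have := neg_abs_le (δ * α^2 * (1 - 2*u) * (1 - 2*v) * Real.exp (α * (u - u^2 + v - v^2)))
  linarith
end

section
/- If α ≤ 2, α ≠ 0, and |δ| ≤ 1/α², then for all u₁ ≤ u₂ and v₁ ≤ v₂ in [0,1], C(u₂,v₂) - C(u₁,v₂) - C(u₂,v₁) + C(u₁,v₁) ≥ 0, where C(u,v) = uv + δ·(1 - exp(α(u-u²)))·(1 - exp(α(v-v²))) (i.e., C is 2-increasing). -/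
/-!
With `φ u = 1 - exp (α (u - u²))` the rectangle sum of `C` is
`(u₂ - u₁)(v₂ - v₁) + δ (φ u₂ - φ u₁)(φ v₂ - φ v₁)`. For `α ≤ 2` the derivative
`-α (1 - 2u) exp (α (u - u²))` of `φ` is bounded by `|α|` on `[0, 1]`, so `φ` is `|α|`-Lipschitz
there and the second term is at most `|δ| α² (u₂ - u₁)(v₂ - v₁) ≤ (u₂ - u₁)(v₂ - v₁)` in absolute
value.
-/

open Real Set

noncomputable def perturbation (α u : ℝ) : ℝ := 1 - exp (α * (u - u ^ 2))

lemma abs_le_exp_sq_sub_one_div_two (t : ℝ) : |t| ≤ exp ((t ^ 2 - 1) / 2) := by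
  have hamgm : |t| ≤ (1 + t ^ 2) / 2 := by nlinarith [sq_abs t, sq_nonneg (|t| - 1)]
  linarith [add_one_le_exp ((t ^ 2 - 1) / 2)]

lemma abs_one_sub_two_mul_mul_exp_le_one {α u : ℝ} (hα : α ≤ 2)
    (hu : u ∈ Icc (0 : ℝ) 1) : |1 - 2 * u| * exp (α * (u - u ^ 2)) ≤ 1 := by
  obtain ⟨hu0, hu1⟩ := hu
  -- `u - u² = (1 - t²) / 4` for `t = 1 - 2u`
  have hexponent : α * (u - u ^ 2) ≤ (1 - (1 - 2 * u) ^ 2) / 2 := by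
    nlinarith [mul_nonneg hu0 (sub_nonneg.mpr hu1)]
  calc |1 - 2 * u| * exp (α * (u - u ^ 2))
      ≤ exp (((1 - 2 * u) ^ 2 - 1) / 2) * exp ((1 - (1 - 2 * u) ^ 2) / 2) :=
        mul_le_mul (abs_le_exp_sq_sub_one_div_two _) (exp_le_exp.mpr hexponent)
          (exp_nonneg _) (exp_nonneg _)
    _ = 1 := by rw [← exp_add]; ring_nf; exact exp_zero

lemma hasDerivAt_perturbation (α u : ℝ) :
    HasDerivAt (perturbation α) (-(α * (1 - 2 * u)) * exp (α * (u - u ^ 2))) u :=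
  ((((hasDerivAt_id' u).sub (hasDerivAt_pow 2 u)).const_mul α).exp.const_sub 1).congr_deriv
    (by simp only [Pi.sub_apply]; push_cast; ring)

lemma abs_perturbation_sub_le {α x y : ℝ} (hα : α ≤ 2) (hx : x ∈ Icc (0 : ℝ) 1)
    (hy : y ∈ Icc (0 : ℝ) 1) :
    |perturbation α y - perturbation α x| ≤ |α| * |y - x| := by
  have hbound : ∀ u ∈ Icc (0 : ℝ) 1,
      ‖-(α * (1 - 2 * u)) * exp (α * (u - u ^ 2))‖ ≤ |α| := fun u hu => by
    rw [Real.norm_eq_abs, abs_mul, abs_neg, abs_mul, abs_of_pos (exp_pos _), mul_assoc]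
    exact mul_le_of_le_one_right (abs_nonneg α) (abs_one_sub_two_mul_mul_exp_le_one hα hu)
  simpa only [Real.norm_eq_abs] using
    (convex_Icc (0 : ℝ) 1).norm_image_sub_le_of_norm_hasDerivWithin_le
      (fun u _ => (hasDerivAt_perturbation α u).hasDerivWithinAt) hbound hx hy

lemma mul_add_mul_mul_nonneg_of_abs_le {p q a b δ L : ℝ} (hp : 0 ≤ p) (hq : 0 ≤ q)
    (ha : |a| ≤ L * p) (hb : |b| ≤ L * q) (hδ : |δ| * L ^ 2 ≤ 1) :
    0 ≤ p * q + δ * a * b := by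
  have hab : |δ * a * b| ≤ |δ| * L ^ 2 * (p * q) := by
    rw [abs_mul, abs_mul]
    calc |δ| * |a| * |b| ≤ |δ| * (L * p) * (L * q) := by
          gcongr
          exact mul_nonneg (abs_nonneg δ) ((abs_nonneg a).trans ha)
      _ = |δ| * L ^ 2 * (p * q) := by ring
  nlinarith [neg_abs_le (δ * a * b), mul_nonneg hp hq]

theorem stmt_8_general (α δ : ℝ) (hα2 : α ≤ 2) (hδ : |δ| ≤ 1/α^2)
    (C : ℝ → ℝ → ℝ)
    (hC : ∀ u v, C u v = u*v + δ * (1 - Real.exp (α * (u - u^2))) * (1 - Real.exp (α * (v - v^2)))) :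
    ∀ u₁ ∈ Set.Icc (0:ℝ) 1, ∀ u₂ ∈ Set.Icc (0:ℝ) 1, ∀ v₁ ∈ Set.Icc (0:ℝ) 1, ∀ v₂ ∈ Set.Icc (0:ℝ) 1,
      u₁ ≤ u₂ → v₁ ≤ v₂ →
      C u₂ v₂ - C u₁ v₂ - C u₂ v₁ + C u₁ v₁ ≥ 0 := by
  intro u₁ hu₁ u₂ hu₂ v₁ hv₁ v₂ hv₂ hu hv
  have hrect : C u₂ v₂ - C u₁ v₂ - C u₂ v₁ + C u₁ v₁ = (u₂ - u₁) * (v₂ - v₁) +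
      δ * (perturbation α u₂ - perturbation α u₁) * (perturbation α v₂ - perturbation α v₁) := by
    simp only [hC, perturbation]; ring
  have hδα : |δ| * |α| ^ 2 ≤ 1 := by
    rcases eq_or_ne α 0 with rfl | hα0
    · simp
    · rwa [sq_abs, ← le_div_iff₀ (by positivity)]
  have hu' := abs_perturbation_sub_le hα2 hu₁ hu₂
  have hv' := abs_perturbation_sub_le hα2 hv₁ hv₂
  rw [abs_of_nonneg (sub_nonneg.mpr hu)] at hu'
  rw [abs_of_nonneg (sub_nonneg.mpr hv)] at hv'
  rw [hrect]
  exact mul_add_mul_mul_nonneg_of_abs_le (sub_nonneg.mpr hu) (sub_nonneg.mpr hv) hu' hv' hδα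

theorem stmt_8 (α δ : ℝ) (hα2 : α ≤ 2) (hα0 : α ≠ 0) (hδ : |δ| ≤ 1/α^2)
    (C : ℝ → ℝ → ℝ)
    (hC : ∀ u v, C u v = u*v + δ * (1 - Real.exp (α * (u - u^2))) * (1 - Real.exp (α * (v - v^2)))) :
    ∀ u₁ ∈ Set.Icc (0:ℝ) 1, ∀ u₂ ∈ Set.Icc (0:ℝ) 1, ∀ v₁ ∈ Set.Icc (0:ℝ) 1, ∀ v₂ ∈ Set.Icc (0:ℝ) 1,
      u₁ ≤ u₂ → v₁ ≤ v₂ →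
      C u₂ v₂ - C u₁ v₂ - C u₂ v₁ + C u₁ v₁ ≥ 0 :=
  stmt_8_general α δ hα2 hδ C hC
end

section
/- The copula C(u,v) = uv + δ·(1 - exp(α(u-u²)))·(1 - exp(α(v-v²))) has upper tail dependence coefficient λ_U = lim_{u→1⁻} (1 - 2u + C(u,u))/(1-u) = 0. -/
open Filter Topology

/- Since `C u u = u² + δ F(u)²` with `F u = 1 - exp (α (u - u²))`, the quotient equals
`(1 - u) + δ F(u)² / (1 - u)`. As `F 1 = 0` and `F` is differentiable at `1`, the difference
quotient `F(u) / (u - 1)` stays bounded while `F(u) → 0`, so `F(u)² / (1 - u) → 0`. -/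

theorem tendsto_sq_div_sub_of_differentiableAt {𝕜 : Type*} [NontriviallyNormedField 𝕜]
    {f : 𝕜 → 𝕜} {a : 𝕜} (hf : DifferentiableAt 𝕜 f a) (ha : f a = 0) :
    Tendsto (fun u => f u ^ 2 / (u - a)) (𝓝[≠] a) (𝓝 0) := by
  have hslope := hasDerivAt_iff_tendsto_slope.mp hf.hasDerivAt
  have hzero : Tendsto f (𝓝[≠] a) (𝓝 0) :=
    ha ▸ hf.continuousAt.tendsto.mono_left nhdsWithin_le_nhds
  simpa [slope_def_field, ha, div_mul_eq_mul_div, sq] using hslope.mul hzero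

theorem stmt_13 (α δ : ℝ) (C : ℝ → ℝ → ℝ)
    (hC : ∀ u v, C u v = u*v + δ * (1 - Real.exp (α * (u - u^2))) * (1 - Real.exp (α * (v - v^2)))) :
    Filter.Tendsto (fun u => (1 - 2*u + C u u) / (1 - u)) (nhdsWithin 1 (Set.Iio 1)) (nhds 0) := by
  set F : ℝ → ℝ := fun u => 1 - Real.exp (α * (u - u^2))
  have hF : DifferentiableAt ℝ F 1 := by fun_prop
  have hF1 : F 1 = 0 := by simp [F]
  have hquot : Tendsto (fun u => F u ^ 2 / (u - 1)) (𝓝[<] 1) (𝓝 0) :=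
    (tendsto_sq_div_sub_of_differentiableAt hF hF1).mono_left
      (nhdsWithin_mono _ fun _ hu => ne_of_lt hu)
  have hlin : Tendsto (fun u : ℝ => 1 - u) (𝓝[<] 1) (𝓝 0) := by
    have h : Tendsto (fun u : ℝ => 1 - u) (𝓝 1) (𝓝 (1 - 1)) := tendsto_const_nhds.sub tendsto_id
    exact (sub_self (1 : ℝ) ▸ h).mono_left nhdsWithin_le_nhds
  have hlim := hlin.sub (hquot.const_mul δ)
  rw [mul_zero, sub_zero] at hlim
  refine hlim.congr' ?_
  filter_upwards [self_mem_nhdsWithin] with u (hu : u < 1)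
  have h1 : 1 - u ≠ 0 := by linarith
  have h2 : u - 1 ≠ 0 := by linarith
  simp only [hC, F]
  field_simp
  ring
end

section
/- If δ ≥ 0 and α ≤ 2, then for all u₁ < u₂ and v₁ < v₂ in [0,1], c(u₁,v₁)·c(u₂,v₂) ≥ c(u₁,v₂)·c(u₂,v₁), where c(u,v) = 1 + δ·α²·(1-2u)(1-2v)·exp(α(u-u²+v-v²)). -/
/-!
The density factorises as `c u v = 1 + δ α² g(u) g(v)` with `g u = (1 - 2u) exp (α (u - u²))`.
Since `g' u = (α (1 - 2u)² - 2) exp (α (u - u²))` and `(1 - 2u)² ≤ 1` on `[0, 1]`, `g` is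
antitone there when `α ≤ 2`, and the cross difference `c u₁ v₁ c u₂ v₂ - c u₁ v₂ c u₂ v₁` equals
`δ α² (g u₁ - g u₂)(g v₁ - g v₂) ≥ 0`.
-/

open Real Set

noncomputable def densityFactor (α u : ℝ) : ℝ := (1 - 2 * u) * exp (α * (u - u ^ 2))

lemma densityFactor_mul (α u v : ℝ) :
    densityFactor α u * densityFactor α v =
      (1 - 2 * u) * (1 - 2 * v) * exp (α * (u - u ^ 2 + v - v ^ 2)) := by
  rw [densityFactor, densityFactor,
    show α * (u - u ^ 2 + v - v ^ 2) = α * (u - u ^ 2) + α * (v - v ^ 2) by ring, exp_add]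
  ring

lemma hasDerivAt_densityFactor (α u : ℝ) :
    HasDerivAt (densityFactor α) ((α * (1 - 2 * u) ^ 2 - 2) * exp (α * (u - u ^ 2))) u := by
  have hlin : HasDerivAt (fun u : ℝ => 1 - 2 * u) (-2) u := by
    simpa using ((hasDerivAt_id u).const_mul (2 : ℝ)).const_sub 1
  have hexp : HasDerivAt (fun u : ℝ => α * (u - u ^ 2)) (α * (1 - 2 * u)) u := by
    simpa using ((hasDerivAt_id u).fun_sub (hasDerivAt_pow 2 u)).const_mul α
  refine (hlin.fun_mul hexp.exp).congr_deriv ?_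
  ring

lemma densityFactor_antitoneOn {α : ℝ} (hα : α ≤ 2) :
    AntitoneOn (densityFactor α) (Icc 0 1) := by
  refine antitoneOn_of_hasDerivWithinAt_nonpos (convex_Icc 0 1)
    (fun u _ => (hasDerivAt_densityFactor α u).continuousAt.continuousWithinAt)
    (fun u _ => (hasDerivAt_densityFactor α u).hasDerivWithinAt) fun u hu => ?_
  rw [interior_Icc] at hu
  have hsq : (1 - 2 * u) ^ 2 ≤ 1 := by nlinarith [hu.1, hu.2]
  have hcoef : α * (1 - 2 * u) ^ 2 - 2 ≤ 0 := by nlinarith [sq_nonneg (1 - 2 * u)]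
  exact mul_nonpos_of_nonpos_of_nonneg hcoef (exp_nonneg _)

lemma one_add_mul_mul_cross_le {k a₁ a₂ b₁ b₂ : ℝ} (hk : 0 ≤ k) (ha : a₂ ≤ a₁) (hb : b₂ ≤ b₁) :
    (1 + k * a₁ * b₂) * (1 + k * a₂ * b₁) ≤ (1 + k * a₁ * b₁) * (1 + k * a₂ * b₂) := by
  have key : (1 + k * a₁ * b₁) * (1 + k * a₂ * b₂) - (1 + k * a₁ * b₂) * (1 + k * a₂ * b₁) =
      k * ((a₁ - a₂) * (b₁ - b₂)) := by ring
  nlinarith [mul_nonneg hk (mul_nonneg (sub_nonneg.2 ha) (sub_nonneg.2 hb))]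

theorem stmt_15 (α δ : ℝ) (hδ : δ ≥ 0) (hα : α ≤ 2) (c : ℝ → ℝ → ℝ)
    (hc : ∀ u v, c u v = 1 + δ * α^2 * (1 - 2*u) * (1 - 2*v) * Real.exp (α * (u - u^2 + v - v^2))) :
    ∀ u₁ ∈ Set.Icc (0:ℝ) 1, ∀ u₂ ∈ Set.Icc (0:ℝ) 1, ∀ v₁ ∈ Set.Icc (0:ℝ) 1, ∀ v₂ ∈ Set.Icc (0:ℝ) 1,
      u₁ < u₂ → v₁ < v₂ → c u₁ v₁ * c u₂ v₂ ≥ c u₁ v₂ * c u₂ v₁ := by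
  intro u₁ hu₁ u₂ hu₂ v₁ hv₁ v₂ hv₂ hu hv
  have hc' : ∀ u v, c u v = 1 + δ * α ^ 2 * densityFactor α u * densityFactor α v := by
    intro u v
    rw [hc, mul_assoc _ (densityFactor α u), densityFactor_mul]
    ring
  simp only [hc', ge_iff_le]
  exact one_add_mul_mul_cross_le (by positivity)
    (densityFactor_antitoneOn hα hu₁ hu₂ hu.le) (densityFactor_antitoneOn hα hv₁ hv₂ hv.le)
end

section
/- Spearman's rho of the copula C(u,v) = uv + δ·(1 - exp(α(u-u²)))·(1 - exp(α(v-v²))), defined as ρ = 12·∫₀¹∫₀¹ C(u,v) du dv - 3, equals 12δ·(∫₀¹ (1 - exp(α(u-u²))) du)², i.e., for α > 0, ρ = 12δ·[1 - √(π/α)·exp(α/4)·erf(√α/2)]². -/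
open Real intervalIntegral
open MeasureTheory (volume)

/-!
The perturbation term of the copula is a product `δ E(u) E(v)`, so its double integral over the
unit square factors as `δ (∫₀¹ E)²`, while `∫∫ uv = 1/4` cancels the `-3`. Completing the square,
`α (u - u²) = α/4 - (√α (u - 1/2))²`, turns `∫₀¹ exp (α (u - u²))` into a Gaussian integral over
the symmetric interval `[-√α/2, √α/2]`, which is `√π · erf (√α/2)` up to the factor `exp (α/4) / √α`.
-/

theorem integral_integral_mul_add_mul {a b c d : ℝ} {f₁ f₂ g₁ g₂ : ℝ → ℝ}
    (hf₁ : IntervalIntegrable f₁ volume a b) (hf₂ : IntervalIntegrable f₂ volume a b)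
    (hg₁ : IntervalIntegrable g₁ volume c d) (hg₂ : IntervalIntegrable g₂ volume c d) :
    ∫ u in a..b, ∫ v in c..d, (f₁ u * g₁ v + f₂ u * g₂ v) =
      (∫ u in a..b, f₁ u) * (∫ v in c..d, g₁ v) + (∫ u in a..b, f₂ u) * (∫ v in c..d, g₂ v) := by
  have inner : ∀ u, ∫ v in c..d, (f₁ u * g₁ v + f₂ u * g₂ v) =
      f₁ u * (∫ v in c..d, g₁ v) + f₂ u * (∫ v in c..d, g₂ v) := fun u => by
    rw [integral_add (hg₁.const_mul _) (hg₂.const_mul _), integral_const_mul, integral_const_mul]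
  simp only [inner]
  rw [integral_add (hf₁.mul_const _) (hf₂.mul_const _), integral_mul_const, integral_mul_const]

theorem integral_neg_self_eq_two_mul_of_even {f : ℝ → ℝ} (hf : Continuous f)
    (heven : ∀ x, f (-x) = f x) (a : ℝ) :
    ∫ x in -a..a, f x = 2 * ∫ x in 0..a, f x := by
  have hleft : ∫ x in -a..0, f x = ∫ x in 0..a, f x := by
    simpa only [heven, neg_zero] using (integral_comp_neg (a := 0) (b := a) f).symm
  rw [← integral_add_adjacent_intervals (hf.intervalIntegrable (-a) 0) (hf.intervalIntegrable 0 a),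
    hleft, two_mul]

theorem integral_exp_mul_sub_sq {α : ℝ} (hα : 0 < α) :
    ∫ u in (0:ℝ)..1, exp (α * (u - u ^ 2)) =
      exp (α / 4) * (2 / √α) * ∫ z in (0:ℝ)..√α / 2, exp (-z ^ 2) := by
  set s := √α
  have hs : s ≠ 0 := (sqrt_pos.mpr hα).ne'
  have complete_square : ∀ u, exp (α * (u - u ^ 2)) = exp (α / 4) * exp (-(s * u - s / 2) ^ 2) :=
    fun u => by
      rw [← exp_add]
      congr 1
      linear_combination (u - u ^ 2 - 1 / 4) * (sq_sqrt hα.le).symm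
  simp only [complete_square]
  rw [integral_const_mul, integral_comp_mul_sub (fun x => exp (-x ^ 2)) hs,
    show s * 0 - s / 2 = -(s / 2) by ring, show s * 1 - s / 2 = s / 2 by ring,
    integral_neg_self_eq_two_mul_of_even (by fun_prop) (fun x => by rw [neg_sq]), smul_eq_mul]
  ring

theorem stmt_17 (α δ : ℝ) (hα : α > 0) (C : ℝ → ℝ → ℝ)
    (hC : ∀ u v, C u v = u*v + δ * (1 - Real.exp (α * (u - u^2))) * (1 - Real.exp (α * (v - v^2))))
    (erf : ℝ → ℝ)
    (herf : ∀ t, erf t = (2 / Real.sqrt Real.pi) * ∫ z in (0:ℝ)..t, Real.exp (-z^2)) :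
    12 * (∫ u in (0:ℝ)..1, ∫ v in (0:ℝ)..1, C u v) - 3 =
      12 * δ * (∫ u in (0:ℝ)..1, (1 - Real.exp (α * (u - u^2))))^2 ∧
    12 * (∫ u in (0:ℝ)..1, ∫ v in (0:ℝ)..1, C u v) - 3 =
      12 * δ * (1 - Real.sqrt (Real.pi / α) * Real.exp (α/4) * erf (Real.sqrt α / 2))^2 := by
  set G : ℝ → ℝ := fun u => exp (α * (u - u ^ 2))
  set E : ℝ → ℝ := fun u => 1 - G u
  have hG : Continuous G := by fun_prop
  have hE : Continuous E := continuous_const.sub hG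
  have hC' : ∀ u v, C u v = u * v + (δ * E u) * E v := hC
  have hρ : 12 * (∫ u in (0:ℝ)..1, ∫ v in (0:ℝ)..1, C u v) - 3 =
      12 * δ * (∫ u in (0:ℝ)..1, E u) ^ 2 := by
    simp only [hC']
    rw [integral_integral_mul_add_mul intervalIntegrable_id ((hE.const_mul δ).intervalIntegrable _ _)
      intervalIntegrable_id (hE.intervalIntegrable _ _), integral_id, integral_const_mul]
    ring
  have hI : ∫ u in (0:ℝ)..1, E u = 1 - √(π / α) * exp (α / 4) * erf (√α / 2) := by
    rw [integral_sub intervalIntegrable_const (hG.intervalIntegrable _ _), integral_one,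
      integral_exp_mul_sub_sq hα, herf, sqrt_div pi_pos.le]
    field_simp
    ring
  exact ⟨hρ, hρ.trans (by rw [hI])⟩
end

section
/- Let C(u,v) = uv + δ·(1 - exp(α(u-u²)))·(1 - exp(α(v-v²))). Then Blest's measure η = 24·∫₀¹∫₀¹ (1-u)·C(u,v) du dv - 2 equals Spearman's rho ρ = 12·∫₀¹∫₀¹ C(u,v) du dv - 3. -/
theorem stmt_18 (α δ : ℝ) (C : ℝ → ℝ → ℝ)
    (hC : ∀ u v, C u v = u*v + δ * (1 - Real.exp (α * (u - u^2))) * (1 - Real.exp (α * (v - v^2)))) :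
    24 * (∫ u in (0:ℝ)..1, ∫ v in (0:ℝ)..1, (1 - u) * C u v) - 2 =
      12 * (∫ u in (0:ℝ)..1, ∫ v in (0:ℝ)..1, C u v) - 3 := by
  set f : ℝ → ℝ := fun u => 1 - Real.exp (α * (u - u^2)) with hf
  have hfc : Continuous f := by fun_prop
  set K : ℝ := ∫ v in (0:ℝ)..1, f v with hK
  have hI : ∀ g : ℝ → ℝ, Continuous g → IntervalIntegrable g MeasureTheory.volume 0 1 :=
    fun g hg => hg.intervalIntegrable 0 1
  have hsym : ∀ u : ℝ, f (1 - u) = f u := by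
    intro u
    have h : α * ((1-u) - (1-u)^2) = α * (u - u^2) := by ring
    simp [hf, h]
  -- inner integral
  have hinner : ∀ u : ℝ, (∫ v in (0:ℝ)..1, C u v) = u/2 + δ * f u * K := by
    intro u
    have : (∫ v in (0:ℝ)..1, C u v)
        = (∫ v in (0:ℝ)..1, u * v) + ∫ v in (0:ℝ)..1, (δ * f u) * f v := by
      rw [← intervalIntegral.integral_add (hI _ (by fun_prop)) (hI _ (by fun_prop))]
      apply intervalIntegral.integral_congr
      intro v _
      rw [hC]
    rw [this, intervalIntegral.integral_const_mul, intervalIntegral.integral_const_mul,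
      integral_id, ← hK]
    norm_num
    ring
  have hhalf : (∫ u in (0:ℝ)..1, (1 - u) * f u) = K / 2 := by
    have h1 : (∫ u in (0:ℝ)..1, (1 - u) * f u) = ∫ u in (0:ℝ)..1, u * f u := by
      have : (∫ u in (0:ℝ)..1, (1 - u) * f u)
          = ∫ u in (0:ℝ)..1, (fun x => x * f x) (1 - u) := by
        apply intervalIntegral.integral_congr
        intro u _
        simp [hsym u]
      rw [this, intervalIntegral.integral_comp_sub_left (fun x => x * f x) 1]
      norm_num
    have h2 : (∫ u in (0:ℝ)..1, (1 - u) * f u) + (∫ u in (0:ℝ)..1, u * f u) = K := by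
      rw [← intervalIntegral.integral_add (hI _ (by fun_prop)) (hI _ (by fun_prop)), hK]
      apply intervalIntegral.integral_congr
      intro u _
      ring
    linarith
  -- outer integrals
  have houter1 : (∫ u in (0:ℝ)..1, ∫ v in (0:ℝ)..1, (1 - u) * C u v)
      = 1/12 + δ * K * (K/2) := by
    have step1 : (∫ u in (0:ℝ)..1, ∫ v in (0:ℝ)..1, (1 - u) * C u v)
        = ∫ u in (0:ℝ)..1, (1 - u) * (u/2 + δ * f u * K) := by
      apply intervalIntegral.integral_congr
      intro u _
      dsimp only
      rw [← hinner u, ← intervalIntegral.integral_const_mul]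
    rw [step1]
    have step2 : (∫ u in (0:ℝ)..1, (1 - u) * (u/2 + δ * f u * K))
        = (∫ u in (0:ℝ)..1, (u/2 - u^2/2)) + ∫ u in (0:ℝ)..1, (δ * K) * ((1 - u) * f u) := by
      rw [← intervalIntegral.integral_add (hI _ (by fun_prop)) (hI _ (by fun_prop))]
      apply intervalIntegral.integral_congr
      intro u _
      ring
    rw [step2, intervalIntegral.integral_const_mul, hhalf]
    have h3 : (∫ u in (0:ℝ)..1, (u/2 - u^2/2))
        = (∫ u in (0:ℝ)..1, u)/2 - (∫ u in (0:ℝ)..1, u^2)/2 := by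
      rw [← intervalIntegral.integral_div, ← intervalIntegral.integral_div,
        ← intervalIntegral.integral_sub (hI _ (by fun_prop)) (hI _ (by fun_prop))]
    rw [h3, integral_id, integral_pow]
    norm_num
  have houter2 : (∫ u in (0:ℝ)..1, ∫ v in (0:ℝ)..1, C u v) = 1/4 + δ * K * K := by
    have step1 : (∫ u in (0:ℝ)..1, ∫ v in (0:ℝ)..1, C u v)
        = (∫ u in (0:ℝ)..1, u/2) + ∫ u in (0:ℝ)..1, (δ * K) * f u := by
      rw [← intervalIntegral.integral_add (hI _ (by fun_prop)) (hI _ (by fun_prop))]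
      apply intervalIntegral.integral_congr
      intro u _
      dsimp only
      rw [hinner u]; ring
    rw [step1, intervalIntegral.integral_const_mul, intervalIntegral.integral_div,
      integral_id, ← hK]
    norm_num
  rw [houter1, houter2]; ring
end
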